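/- Let r ≥ 1 be an integer and consider a coordinate change q̃ = φ(q) on a curve with p̃_r = p_r · (dφ/dq)^{−r} (the transformation rule for coefficients of 1-forms of weight r). Then p̃_r^{1−r} · (dp̃_r ∧ dq̃)^r = p_r^{1−r} · (dp_r ∧ dq)^r, i.e., the expression p_r^{1−r}(dp_r ∧ dq)^r is invariant under coordinate changes, as formal meromorphic 2-forms of weight r. -/

import Mathlib

/-! Under `p̃ = p c⁻ʳ`, `q̃ = φ(q)` with `c = φ'(q)`, the Jacobian `∂(p̃, q̃)/∂(p, q)` is
triangular, since `q̃` does not depend on `p`; it equals `c⁻ʳ · c = c^(1-r)`. The exponents of `c`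
then cancel: `-r(1-r) + (1-r)r = 0`. -/

theorem jacobian_fiberwise_scaling {𝕜 : Type*} [NontriviallyNormedField 𝕜] (g : 𝕜 → 𝕜)
    (a b c p q : 𝕜) :
    deriv (fun t => t * a) p * b - deriv g q * deriv (fun _ : 𝕜 => c) p = a * b := by
  simp

theorem mul_zpow_neg_zpow_one_sub_mul_pow_eq {G₀ : Type*} [CommGroupWithZero G₀] {c : G₀}
    (hc : c ≠ 0) (p : G₀) (r : ℤ) :
    (p * c ^ (-r)) ^ (1 - r) * (c ^ (-r) * c) ^ r = p ^ (1 - r) := by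
  rw [← zpow_add_one₀ hc, mul_zpow, mul_assoc, ← zpow_mul, ← zpow_mul, ← zpow_add₀ hc,
    show -r * (1 - r) + (-r + 1) * r = 0 by ring, zpow_zero, mul_one]

theorem stmt_10_general (r : ℕ) (φ : ℂ → ℂ) (q p : ℂ)
    (hφ' : deriv φ q ≠ 0) :
    (p * (deriv φ q) ^ (-(r : ℤ))) ^ (1 - (r : ℤ)) *
        (deriv (fun t : ℂ => t * (deriv φ q) ^ (-(r : ℤ))) p * deriv φ q
          - deriv (fun t : ℂ => p * (deriv φ t) ^ (-(r : ℤ))) q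
              * deriv (fun _ : ℂ => φ q) p) ^ r
      = p ^ (1 - (r : ℤ)) := by
  rw [jacobian_fiberwise_scaling, ← zpow_natCast]
  exact mul_zpow_neg_zpow_one_sub_mul_pow_eq hφ' p r

/-- Invariance of `p^{1-r} (dp ∧ dq)^r` under a coordinate change
`q̃ = φ(q)`, `p̃ = p · (φ'(q))^{-r}` : denoting by `D` the Jacobian
determinant `∂(p̃, q̃)/∂(p, q)` (the coefficient of `dp̃ ∧ dq̃` relative to
`dp ∧ dq`), one has `p̃^{1-r} · D^r = p^{1-r}`. -/
theorem stmt_10 (r : ℕ) (hr : 1 ≤ r) (φ : ℂ → ℂ) (q p : ℂ)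
    (hφ : DifferentiableAt ℂ φ q) (hφ' : deriv φ q ≠ 0) (hp : p ≠ 0) :
    (p * (deriv φ q) ^ (-(r : ℤ))) ^ (1 - (r : ℤ)) *
        (deriv (fun t : ℂ => t * (deriv φ q) ^ (-(r : ℤ))) p * deriv φ q
          - deriv (fun t : ℂ => p * (deriv φ t) ^ (-(r : ℤ))) q
              * deriv (fun _ : ℂ => φ q) p) ^ r
      = p ^ (1 - (r : ℤ)) :=
  stmt_10_general r φ q p hφ'
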